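/- One has ∫_{−1}^{1} Φ_{00}(x) dx = 1, and for all natural numbers i, i' with i + i' ≥ 1 and every natural number k with 0 ≤ k ≤ i + i' − 1, ∫_{−1}^{1} x^k Φ_{ii'}(x) dx = 0. -/

import Mathlib

open Real MeasureTheory

/-- The degree-`k` Legendre polynomial via the Rodrigues formula
`P_k(t) = (1/(2^k k!)) (d/dt)^k (t² - 1)^k`. -/
noncomputable def legendreP (k : ℕ) (t : ℝ) : ℝ :=
  (1 / ((2 : ℝ) ^ k * (Nat.factorial k : ℝ))) *
    (Polynomial.derivative^[k] (((Polynomial.X : Polynomial ℝ) ^ 2 - 1) ^ k)).eval t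

/-- The scaling functions `φ_k(x) = √(2k+1) P_k(2x-1)` on `[0,1]`, extended by zero. -/
noncomputable def scalingFn (k : ℕ) (x : ℝ) : ℝ :=
  if x ∈ Set.Icc (0:ℝ) 1 then Real.sqrt (2 * (k : ℝ) + 1) * legendreP k (2 * x - 1) else 0

/-- The cross-correlation functions `Φ_{ii'}(x) = ∫ φ_i(x+y) φ_{i'}(y) dy`. -/
noncomputable def crossCorr (i i' : ℕ) (x : ℝ) : ℝ :=
  ∫ y : ℝ, scalingFn i (x + y) * scalingFn i' y

/-! Substituting `u = x + y` and using Fubini, the `k`-th moment of `Φ_{ii'}` becomes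
`∫∫ (u - y)^k φ_i(u) φ_{i'}(y)`, which by the binomial theorem is a sum of products of moments
`∫ u^m φ_i` and `∫ y^(k-m) φ_{i'}`. By Rodrigues' formula and `n` integrations by parts, `P_n` is
orthogonal to all polynomials of degree `< n`, so `∫ x^j φ_n = 0` for `j < n`; when `k < i + i'`
every product has such a factor, since `m < i` or `k - m < i'`. -/

open Polynomial Set

theorem Polynomial.eval_iterate_derivative_eq_zero_of_pow_dvd {R : Type*} [CommRing R]
    {p : R[X]} {t : R} {n j : ℕ} (hp : (X - C t) ^ n ∣ p) (hj : j < n) :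
    (derivative^[j] p).eval t = 0 :=
  dvd_iff_isRoot.mp <| (dvd_pow_self _ (Nat.sub_ne_zero_of_lt hj)).trans
    (pow_sub_dvd_iterate_derivative_of_pow_dvd j hp)

theorem intervalIntegral.integral_eval_mul_eval_iterate_derivative {a b : ℝ} {Q : ℝ[X]} {m : ℕ}
    (hQ : ∀ j < m, (derivative^[j] Q).eval a = 0 ∧ (derivative^[j] Q).eval b = 0) (p : ℝ[X]) :
    ∫ t in a..b, p.eval t * (derivative^[m] Q).eval t =
      (-1) ^ m * ∫ t in a..b, (derivative^[m] p).eval t * Q.eval t := by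
  induction m generalizing p with
  | zero => simp
  | succ m ih =>
    obtain ⟨hQa, hQb⟩ := hQ m m.lt_succ_self
    rw [Function.iterate_succ_apply', integral_mul_deriv_eq_deriv_mul
      (fun t _ => p.hasDerivAt t) (fun t _ => (derivative^[m] Q).hasDerivAt t)
      ((Polynomial.continuous _).intervalIntegrable _ _)
      ((Polynomial.continuous _).intervalIntegrable _ _),
      hQa, hQb, ih (fun j hj => hQ j (hj.trans m.lt_succ_self)), Function.iterate_succ_apply]
    ring

theorem iterate_derivative_X_sq_sub_one_pow_eval_eq_zero {n j : ℕ} (hj : j < n) :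
    (derivative^[j] (((X : ℝ[X]) ^ 2 - 1) ^ n)).eval (-1) = 0 ∧
      (derivative^[j] (((X : ℝ[X]) ^ 2 - 1) ^ n)).eval 1 = 0 := by
  have hdvd (t : ℝ) (ht : t ^ 2 = 1) : (X - C t) ^ n ∣ ((X : ℝ[X]) ^ 2 - 1) ^ n :=
    pow_dvd_pow_of_dvd (dvd_iff_isRoot.mpr (by simp [ht])) n
  exact ⟨eval_iterate_derivative_eq_zero_of_pow_dvd (hdvd (-1) (by norm_num)) hj,
    eval_iterate_derivative_eq_zero_of_pow_dvd (hdvd 1 (by norm_num)) hj⟩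

theorem integral_eval_mul_legendreP_eq_zero {n : ℕ} {p : ℝ[X]} (hp : p.natDegree < n) :
    ∫ t in (-1:ℝ)..1, p.eval t * legendreP n t = 0 := by
  simp only [legendreP, mul_left_comm (p.eval _), intervalIntegral.integral_const_mul,
    intervalIntegral.integral_eval_mul_eval_iterate_derivative
      (fun j hj => iterate_derivative_X_sq_sub_one_pow_eval_eq_zero hj),
    iterate_derivative_eq_zero hp, eval_zero, zero_mul, intervalIntegral.integral_zero, mul_zero]

@[fun_prop]
theorem continuous_legendreP (n : ℕ) : Continuous (legendreP n) := by
  unfold legendreP; fun_prop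

theorem pow_mul_scalingFn_eq_indicator (k j : ℕ) :
    (fun x => x ^ j * scalingFn k x) = (Icc 0 1).indicator
      (fun x => x ^ j * (√(2 * k + 1) * legendreP k (2 * x - 1))) := by
  ext x
  by_cases hx : x ∈ Icc (0:ℝ) 1 <;> simp [scalingFn, hx]

theorem integrable_pow_mul_scalingFn (k j : ℕ) : Integrable (fun x => x ^ j * scalingFn k x) := by
  rw [pow_mul_scalingFn_eq_indicator]
  exact (Continuous.integrableOn_Icc (by fun_prop)).integrable_indicator measurableSet_Icc

theorem integral_pow_mul_scalingFn (k j : ℕ) :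
    ∫ x, x ^ j * scalingFn k x =
      ∫ x in (0:ℝ)..1, x ^ j * (√(2 * k + 1) * legendreP k (2 * x - 1)) := by
  rw [pow_mul_scalingFn_eq_indicator, integral_indicator measurableSet_Icc,
    integral_Icc_eq_integral_Ioc, intervalIntegral.integral_of_le zero_le_one]

theorem integral_pow_mul_scalingFn_eq_zero {k j : ℕ} (hj : j < k) :
    ∫ x, x ^ j * scalingFn k x = 0 := by
  set p : ℝ[X] := (C 2⁻¹ * (X + 1)) ^ j
  have hp : p.natDegree < k := by
    refine (natDegree_pow_le_of_le j ?_).trans_lt (by rwa [mul_one])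
    exact (natDegree_C_mul_le _ _).trans (natDegree_X_add_C (1:ℝ)).le
  have hx (x : ℝ) : x ^ j = p.eval (2 * x - 1) := by simp [p]
  simp_rw [integral_pow_mul_scalingFn, hx, mul_left_comm (p.eval _)]
  rw [intervalIntegral.integral_const_mul,
    intervalIntegral.integral_comp_mul_sub (fun t => p.eval t * legendreP k t) two_ne_zero]
  norm_num [integral_eval_mul_legendreP_eq_zero hp]

theorem integral_scalingFn_zero : ∫ x, scalingFn 0 x = 1 := by
  simpa [legendreP] using integral_pow_mul_scalingFn 0 0

theorem integral_pow_mul_integral_mul_add {f g : ℝ → ℝ} {k : ℕ}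
    (hf : ∀ m ≤ k, Integrable (fun x => x ^ m * f x))
    (hg : ∀ m ≤ k, Integrable (fun y => y ^ m * g y)) :
    ∫ x, x ^ k * ∫ y, f (x + y) * g y =
      ∑ m ∈ Finset.range (k + 1),
        (-1) ^ (m + k) * k.choose m * (∫ u, u ^ m * f u) * ∫ y, y ^ (k - m) * g y := by
  set F : ℝ × ℝ → ℝ := fun z => (z.1 - z.2) ^ k * (f z.1 * g z.2)
  set T : ℕ → ℝ × ℝ → ℝ := fun m z =>
    (-1) ^ (m + k) * k.choose m * ((z.1 ^ m * f z.1) * (z.2 ^ (k - m) * g z.2))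
  have hF_expand : F = fun z => ∑ m ∈ Finset.range (k + 1), T m z := by
    ext z
    simp only [F, T, sub_pow, Finset.sum_mul]
    exact Finset.sum_congr rfl fun m _ => by ring
  have hT (m : ℕ) (hm : m ∈ Finset.range (k + 1)) : Integrable (T m) (volume.prod volume) :=
    ((hf m (Finset.mem_range_succ_iff.mp hm)).mul_prod
      (hg (k - m) (Nat.sub_le k m))).const_mul _
  have hF : Integrable F (volume.prod volume) := hF_expand ▸ integrable_finsetSum _ hT
  have hshear := measurePreserving_add_prod (volume : Measure ℝ) volume
  have hF_shear : (fun z : ℝ × ℝ => z.1 ^ k * (f (z.1 + z.2) * g z.2)) =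
      F ∘ fun z => (z.1 + z.2, z.2) := by
    ext z; simp [F]
  calc ∫ x, x ^ k * ∫ y, f (x + y) * g y
      = ∫ z, z.1 ^ k * (f (z.1 + z.2) * g z.2) ∂(volume.prod volume) := by
        rw [integral_prod _ (hF_shear ▸ hshear.integrable_comp_of_integrable hF)]
        simp_rw [integral_const_mul]
    _ = ∫ z, F z ∂(volume.prod volume) := by
        rw [hF_shear, Function.comp_def, ← integral_map hshear.measurable.aemeasurable
          (by rw [hshear.map_eq]; exact hF.aestronglyMeasurable), hshear.map_eq]
    _ = _ := by
        rw [hF_expand, integral_finsetSum _ hT]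
        refine Finset.sum_congr rfl fun m _ => ?_
        rw [integral_const_mul,
          integral_prod_mul (fun u => u ^ m * f u) (fun y => y ^ (k - m) * g y)]
        ring

theorem crossCorr_eq_zero_of_notMem_Icc (i i' : ℕ) {x : ℝ} (hx : x ∉ Icc (-1) 1) :
    crossCorr i i' x = 0 := by
  refine integral_eq_zero_of_ae (Filter.Eventually.of_forall fun y => ?_)
  by_cases hy : y ∈ Icc (0:ℝ) 1
  · have hxy : x + y ∉ Icc (0:ℝ) 1 := fun hxy =>
      hx ⟨by linarith [hxy.1, hy.2], by linarith [hxy.2, hy.1]⟩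
    simp [scalingFn, hxy]
  · simp [scalingFn, hy]

theorem integral_pow_mul_crossCorr (i i' k : ℕ) :
    ∫ x in (-1:ℝ)..1, x ^ k * crossCorr i i' x =
      ∑ m ∈ Finset.range (k + 1), (-1) ^ (m + k) * k.choose m *
        (∫ u, u ^ m * scalingFn i u) * ∫ y, y ^ (k - m) * scalingFn i' y := by
  rw [intervalIntegral.integral_of_le (by norm_num), ← integral_Icc_eq_integral_Ioc,
    setIntegral_eq_integral_of_forall_compl_eq_zero fun x hx => by
      rw [crossCorr_eq_zero_of_notMem_Icc i i' hx, mul_zero]]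
  exact integral_pow_mul_integral_mul_add (fun m _ => integrable_pow_mul_scalingFn i m)
    (fun m _ => integrable_pow_mul_scalingFn i' m)

/-- Vanishing moments: `∫_{-1}^{1} Φ_{00}(x) dx = 1` and, for `i + i' ≥ 1`,
`∫_{-1}^{1} x^k Φ_{ii'}(x) dx = 0` for `0 ≤ k ≤ i + i' - 1`. -/
theorem crossCorr_vanishing_moments :
    (∫ x in (-1:ℝ)..1, crossCorr 0 0 x) = 1 ∧
    (∀ i i' k : ℕ, 1 ≤ i + i' → k ≤ i + i' - 1 →
      (∫ x in (-1:ℝ)..1, x ^ k * crossCorr i i' x) = 0) := by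
  refine ⟨?_, fun i i' k hii' hk => ?_⟩
  · simpa [integral_scalingFn_zero] using integral_pow_mul_crossCorr 0 0 0
  · rw [integral_pow_mul_crossCorr]
    refine Finset.sum_eq_zero fun m hm => ?_
    rcases lt_or_ge m i with hmi | hmi
    · rw [integral_pow_mul_scalingFn_eq_zero hmi]; ring
    · have hm : m ≤ k := Finset.mem_range_succ_iff.mp hm
      rw [integral_pow_mul_scalingFn_eq_zero (j := k - m) (by omega)]; ring
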